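/- Let ε > 0 and let g₀ : (0,∞) → [0,ω₁) be a left-continuous non-increasing function whose range is a finite set of ordinals and such that g₀(t) = 0 for all t > t₀, for some t₀ < ∞. Then there exist n ∈ ℕ, left-continuous non-increasing functions g₁, …, g_n from (0,∞) into [0,ω₁), and a non-increasing finite sequence of ordinals γ₀ ≥ γ₁ ≥ … ≥ γ_{n−1} such that: each γ_i is of the form ω^{β_i} for some ordinal β_i; γ_i ≤ g_i(ε) for each i < n; for each i < n, g_{i+1} is the non-increasing left-continuous rearrangement of g_i − γ_i·1_{(0,ε]}; and g_n(t) = 0 for all t ≥ ε. -/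

import Mathlib

open MeasureTheory Set Ordinal Filter
open scoped Classical

/-- `g` is non-increasing on `(0,∞)`. -/
def NonIncr (g : ℝ → Ordinal) : Prop := ∀ s t : ℝ, 0 < s → s ≤ t → g t ≤ g s

/-- `g` is left continuous on `(0,∞)`; for non-increasing ordinal-valued
functions this is equivalent to being locally constant from the left. -/
def LeftCont (g : ℝ → Ordinal) : Prop :=
  ∀ t : ℝ, 0 < t → ∃ δ > 0, ∀ s : ℝ, t - δ < s → s ≤ t → g s = g t

/-- `g` has finite range on `(0,∞)`. -/
def FiniteRange (g : ℝ → Ordinal) : Prop := (g '' Set.Ioi (0:ℝ)).Finite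

/-- `g` takes values in `[0,ω₁)`, the countable ordinals. -/
def CountableValued (g : ℝ → Ordinal) : Prop := ∀ t : ℝ, 0 < t → g t < ω₁

/-- `g` vanishes beyond `A`. -/
def VanishesBeyond (g : ℝ → Ordinal) (A : ℝ) : Prop := ∀ t : ℝ, A < t → g t = 0

/-- The level set `{t ∈ (0,∞) : g t = α}`. -/
def lev (g : ℝ → Ordinal) (α : Ordinal) : Set ℝ := {t | 0 < t ∧ g t = α}

/-- `G` is the non-increasing left-continuous rearrangement of `u`: it is
non-increasing, left continuous, and each nonzero level set has the same
Lebesgue measure as that of `u`. -/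
def IsRearrangement (G u : ℝ → Ordinal) : Prop :=
  NonIncr G ∧ LeftCont G ∧ ∀ α : Ordinal, 0 < α → volume (lev G α) = volume (lev u α)

/-- The function `g − γ·1_I` (pointwise ordinal subtraction on `I`). -/
noncomputable def subInd (g : ℝ → Ordinal) (γ : Ordinal) (I : Set ℝ) : ℝ → Ordinal :=
  fun t => if t ∈ I then g t - γ else g t

open scoped ENNReal

/-!
Put `β = log_ω g(ε)`, so `ω ^ β ≤ g(ε) < ω ^ (β + 1)`. Subtracting `ω ^ β` on `(0, ε]` leaves the
set `D = {g ≥ ω ^ (β + 1)}` untouched, because `ω ^ β` is absorbed there, and by left continuity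
at `ε` this set has measure `|D| < ε`. Everywhere else on `(0, ε]` the (finite) coefficient of
`ω ^ β` drops by exactly one, so its integral drops by `ε - |D| > 0`. Both `|D|` and this integral
only depend on the measures of the level sets, hence survive rearrangement. So after finitely many
steps with the same `β` the value at `ε` falls below `ω ^ β`, and induction on `β` concludes.
-/

theorem sub_omega0_opow_eq_self {β ξ : Ordinal} (h : ω ^ (β + 1) ≤ ξ) : ξ - ω ^ β = ξ :=
  Ordinal.sub_eq_of_add_eq <| add_of_omega0_opow_le
    ((opow_lt_opow_iff_right one_lt_omega0).2 (lt_add_one β)) h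

theorem lt_omega0_opow_log_add_one (x : Ordinal) : x < ω ^ (log ω x + 1) := by
  simpa [Order.succ_eq_add_one] using lt_opow_succ_log_self one_lt_omega0 x

theorem omega0_opow_add_one_le_sub_iff {β ξ : Ordinal} :
    ω ^ (β + 1) ≤ ξ - ω ^ β ↔ ω ^ (β + 1) ≤ ξ :=
  ⟨fun h => h.trans (Ordinal.sub_le_self _ _), fun h => (sub_omega0_opow_eq_self h).symm ▸ h⟩

/-- The coefficient of `ω ^ β` in `α` when `ω ^ β ≤ α < ω ^ (β + 1)`; junk otherwise. -/
noncomputable def opowCoeff (β α : Ordinal) : ℕ := Cardinal.toNat (α / ω ^ β).card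

theorem opowCoeff_zero (β : Ordinal) : opowCoeff β 0 = 0 := by
  simp [opowCoeff]

theorem opowCoeff_sub_add_one {β ξ : Ordinal} (h₁ : ω ^ β ≤ ξ) (h₂ : ξ < ω ^ (β + 1)) :
    opowCoeff β (ξ - ω ^ β) + 1 = opowCoeff β ξ := by
  have hP : ω ^ β ≠ 0 := opow_ne_zero _ omega0_ne_zero
  have hdiv : ξ / ω ^ β = 1 + (ξ - ω ^ β) / ω ^ β := by
    conv_lhs => rw [← Ordinal.add_sub_cancel_of_le h₁]
    rw [← Ordinal.mul_add_div 1 hP, mul_one]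
  have hlt : ξ / ω ^ β < ω := (Ordinal.lt_mul_iff_div_lt hP).1 (by rwa [← opow_add_one])
  obtain ⟨k, hk⟩ := Ordinal.lt_omega0.1
    ((CanonicallyOrderedAdd.le_add_self _ 1).trans_lt (hdiv ▸ hlt))
  rw [opowCoeff, opowCoeff, hdiv, hk, ← Nat.cast_one (R := Ordinal), ← Nat.cast_add,
    Ordinal.card_nat, Ordinal.card_nat, Cardinal.toNat_natCast, Cardinal.toNat_natCast,
    Nat.add_comm]

def upperLev (f : ℝ → Ordinal) (c : Ordinal) : Set ℝ := {t | 0 < t ∧ c ≤ f t}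

theorem NonIncr.measurableSet_upperLev {f : ℝ → Ordinal} (hf : NonIncr f) (c : Ordinal) :
    MeasurableSet (upperLev f c) :=
  Set.OrdConnected.measurableSet
    ⟨fun _ hx _ hy z hz => ⟨hx.1.trans_le hz.1, hy.2.trans (hf z _ (hx.1.trans_le hz.1) hz.2)⟩⟩

theorem lev_eq_upperLev_diff (f : ℝ → Ordinal) (α : Ordinal) :
    lev f α = upperLev f α \ upperLev f (Order.succ α) := by
  ext t
  simp only [lev, upperLev, Set.mem_sdiff, mem_ofPred_eq, Order.succ_le_iff, not_and, not_lt]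
  exact ⟨fun ⟨ht, h⟩ => ⟨⟨ht, h.ge⟩, fun _ => h.le⟩,
    fun ⟨⟨ht, h₁⟩, h₂⟩ => ⟨ht, (h₂ ht).antisymm h₁⟩⟩

theorem NonIncr.measurableSet_lev {f : ℝ → Ordinal} (hf : NonIncr f) (α : Ordinal) :
    MeasurableSet (lev f α) := by
  rw [lev_eq_upperLev_diff]
  exact (hf.measurableSet_upperLev _).diff (hf.measurableSet_upperLev _)

theorem NonIncr.upperLev_subset_Ioc {f : ℝ → Ordinal} (hf : NonIncr f) {ε : ℝ} (hε : 0 < ε)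
    {c : Ordinal} (h : f ε < c) : upperLev f c ⊆ Ioc 0 ε :=
  fun t ⟨ht, hc⟩ => ⟨ht, le_of_not_gt fun hεt => (hc.trans (hf ε t hε hεt.le)).not_gt h⟩

/-- By left continuity at `ε`, the set `{f ≥ c}` ends strictly before `ε`. -/
theorem volume_upperLev_lt {f : ℝ → Ordinal} (hf : NonIncr f) (hlc : LeftCont f) {ε : ℝ}
    (hε : 0 < ε) {c : Ordinal} (h : f ε < c) : volume (upperLev f c) < ENNReal.ofReal ε := by
  obtain ⟨δ, hδ, hconst⟩ := hlc ε hε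
  have hsub : upperLev f c ⊆ Ioc 0 (ε - min δ ε) := fun t ht => by
    have htε := (hf.upperLev_subset_Ioc hε h ht).2
    refine ⟨ht.1, le_of_not_gt fun hlt => ?_⟩
    have := hconst t (by linarith [min_le_left δ ε]) htε
    exact (ht.2.trans this.le).not_gt h
  calc volume (upperLev f c) ≤ volume (Ioc 0 (ε - min δ ε)) := measure_mono hsub
    _ < ENNReal.ofReal ε := by
      rw [Real.volume_Ioc, _root_.sub_zero, ENNReal.ofReal_lt_ofReal_iff hε]
      linarith [lt_min hδ hε]

theorem NonIncr.lt_of_volume_upperLev_lt {f : ℝ → Ordinal} (hf : NonIncr f) {ε : ℝ}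
    {c : Ordinal} (h : volume (upperLev f c) < ENNReal.ofReal ε) : f ε < c := by
  by_contra! hc
  have : Ioc 0 ε ⊆ upperLev f c := fun t ht => ⟨ht.1, hc.trans (hf t ε ht.1 ht.2)⟩
  exact (measure_mono this).not_gt (by rwa [Real.volume_Ioc, _root_.sub_zero])

theorem VanishesBeyond.volume_lev_lt_top {f : ℝ → Ordinal} {A : ℝ} (hf : VanishesBeyond f A)
    {α : Ordinal} (hα : α ≠ 0) : volume (lev f α) < ∞ := by
  have : lev f α ⊆ Ioc 0 A := fun t ⟨ht, hft⟩ =>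
    ⟨ht, le_of_not_gt fun hAt => hα (hft ▸ hf t hAt)⟩
  exact (measure_mono this).trans_lt (by simp [Real.volume_Ioc])

theorem setLIntegral_comp_eq_sum (f : ℝ → Ordinal) (φ : Ordinal → ℝ≥0∞) {S : Finset Ordinal}
    (hS : f '' Ioi 0 ⊆ S) (hf : ∀ α, MeasurableSet (lev f α)) :
    ∫⁻ t in Ioi 0, φ (f t) = ∑ α ∈ S, φ α * volume (lev f α) := by
  have hcover : Ioi (0 : ℝ) = ⋃ α ∈ S, lev f α := by
    ext t
    simp only [mem_Ioi, mem_iUnion, lev, mem_ofPred_eq, exists_prop]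
    exact ⟨fun ht => ⟨f t, hS ⟨t, ht, rfl⟩, ht, rfl⟩, fun ⟨_, _, ht, _⟩ => ht⟩
  have hdisj : (S : Set Ordinal).PairwiseDisjoint (lev f) := fun _ _ _ _ h =>
    Set.disjoint_left.2 fun _ h₁ h₂ => h (h₁.2.symm.trans h₂.2)
  rw [hcover, lintegral_biUnion_finset hdisj fun α _ => hf α]
  refine Finset.sum_congr rfl fun α _ => ?_
  rw [setLIntegral_congr_fun (hf α) fun t ht => by rw [ht.2], setLIntegral_const]

theorem setLIntegral_comp_eq_of_volume_lev_eq {f f' : ℝ → Ordinal} (hf : FiniteRange f)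
    (hf' : FiniteRange f') (hmf : ∀ α, MeasurableSet (lev f α))
    (hmf' : ∀ α, MeasurableSet (lev f' α))
    (h : ∀ α, 0 < α → volume (lev f α) = volume (lev f' α)) {φ : Ordinal → ℝ≥0∞} (hφ : φ 0 = 0) :
    ∫⁻ t in Ioi 0, φ (f t) = ∫⁻ t in Ioi 0, φ (f' t) := by
  have hS : f '' Ioi 0 ⊆ ↑(hf.toFinset ∪ hf'.toFinset) := by
    rw [Finset.coe_union, hf.coe_toFinset]; exact subset_union_left
  have hS' : f' '' Ioi 0 ⊆ ↑(hf.toFinset ∪ hf'.toFinset) := by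
    rw [Finset.coe_union, hf'.coe_toFinset]; exact subset_union_right
  rw [setLIntegral_comp_eq_sum f φ hS hmf, setLIntegral_comp_eq_sum f' φ hS' hmf']
  refine Finset.sum_congr rfl fun α _ => ?_
  rcases eq_or_ne α 0 with rfl | hα
  · simp [hφ]
  · rw [h α (pos_iff_ne_zero.2 hα)]

theorem volume_upperLev_eq_setLIntegral {f : ℝ → Ordinal} {c : Ordinal}
    (hm : MeasurableSet (upperLev f c)) :
    volume (upperLev f c) = ∫⁻ t in Ioi 0, (Ici c).indicator 1 (f t) := by
  have hpt : EqOn (fun t => (Ici c).indicator (1 : Ordinal → ℝ≥0∞) (f t))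
      ((upperLev f c).indicator 1) (Ioi 0) := fun t ht => by
    by_cases hc : c ≤ f t <;> simp [upperLev, indicator, hc, mem_Ioi.1 ht]
  rw [setLIntegral_congr_fun measurableSet_Ioi hpt, lintegral_indicator_one hm,
    Measure.restrict_apply hm, inter_eq_left.2 fun t ht => ht.1]

theorem IsRearrangement.volume_upperLev_eq {G u : ℝ → Ordinal} (h : IsRearrangement G u)
    (hG : FiniteRange G) (hu : FiniteRange u) (hmu : ∀ α, MeasurableSet (lev u α)) {c : Ordinal}
    (hc : c ≠ 0) (hmc : MeasurableSet (upperLev u c)) :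
    volume (upperLev G c) = volume (upperLev u c) := by
  rw [volume_upperLev_eq_setLIntegral (h.1.measurableSet_upperLev c),
    volume_upperLev_eq_setLIntegral hmc, setLIntegral_comp_eq_of_volume_lev_eq hG hu
      h.1.measurableSet_lev hmu h.2.2 (by simp [hc])]

theorem NonIncr.sub_const {f : ℝ → Ordinal} (hf : NonIncr f) (γ : Ordinal) :
    NonIncr fun t => f t - γ :=
  fun s t hs hst => Ordinal.sub_le.2 ((hf s t hs hst).trans (Ordinal.le_add_sub _ _))

theorem FiniteRange.subInd {g : ℝ → Ordinal} (hg : FiniteRange g) (γ : Ordinal) (I : Set ℝ) :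
    FiniteRange (subInd g γ I) := by
  refine ((hg.image (· - γ)).union hg).subset ?_
  rintro _ ⟨t, ht, rfl⟩
  by_cases hI : t ∈ I
  · exact Or.inl ⟨g t, ⟨t, ht, rfl⟩, (if_pos hI).symm⟩
  · exact Or.inr ⟨t, ht, (if_neg hI).symm⟩

theorem VanishesBeyond.subInd {g : ℝ → Ordinal} {A : ℝ} (hg : VanishesBeyond g A)
    (γ : Ordinal) (I : Set ℝ) : VanishesBeyond (subInd g γ I) A :=
  fun t ht => by simp [_root_.subInd, hg t ht]

theorem NonIncr.measurableSet_lev_subInd {g : ℝ → Ordinal} (hg : NonIncr g) (γ : Ordinal)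
    {I : Set ℝ} (hI : MeasurableSet I) (α : Ordinal) :
    MeasurableSet (lev (subInd g γ I) α) := by
  have : lev (subInd g γ I) α = I ∩ lev (fun t => g t - γ) α ∪ lev g α \ I := by
    ext t
    by_cases h : t ∈ I <;> simp [lev, _root_.subInd, h]
  rw [this]
  exact (hI.inter ((hg.sub_const γ).measurableSet_lev α)).union ((hg.measurableSet_lev α).diff hI)

theorem upperLev_subInd_omega0_opow (g : ℝ → Ordinal) (β : Ordinal) (I : Set ℝ) :
    upperLev (subInd g (ω ^ β) I) (ω ^ (β + 1)) = upperLev g (ω ^ (β + 1)) := by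
  ext t
  by_cases h : t ∈ I <;>
    simp only [upperLev, _root_.subInd, h, if_true, if_false, mem_ofPred_eq,
      omega0_opow_add_one_le_sub_iff]

noncomputable def coeffMass (β : Ordinal) (f : ℝ → Ordinal) : ℝ≥0∞ :=
  ∫⁻ t in Ioi 0, (opowCoeff β (f t) : ℝ≥0∞)

theorem coeffMass_ne_top {f : ℝ → Ordinal} {A : ℝ} (hf : FiniteRange f)
    (hvan : VanishesBeyond f A) (hm : ∀ α, MeasurableSet (lev f α)) (β : Ordinal) :
    coeffMass β f ≠ ∞ := by
  rw [coeffMass,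
    setLIntegral_comp_eq_sum f (fun α => (opowCoeff β α : ℝ≥0∞)) hf.coe_toFinset.superset hm]
  refine ENNReal.sum_ne_top.2 fun α _ => ?_
  rcases eq_or_ne α 0 with rfl | hα
  · simp [opowCoeff_zero]
  · exact ENNReal.mul_ne_top (ENNReal.natCast_ne_top _) (hvan.volume_lev_lt_top hα).ne

theorem coeffMass_subInd_add {g : ℝ → Ordinal} (hg : NonIncr g) {ε : ℝ} {β : Ordinal}
    (hβ : ω ^ β ≤ g ε) (hD : MeasurableSet (upperLev g (ω ^ (β + 1)))) :
    coeffMass β (subInd g (ω ^ β) (Ioc 0 ε)) + volume (Ioc 0 ε \ upperLev g (ω ^ (β + 1))) =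
      coeffMass β g := by
  set D := upperLev g (ω ^ (β + 1))
  have hmeas : MeasurableSet (Ioc 0 ε \ D) := measurableSet_Ioc.diff hD
  have hpt : EqOn (fun t => (opowCoeff β (subInd g (ω ^ β) (Ioc 0 ε) t) : ℝ≥0∞) +
      (Ioc 0 ε \ D).indicator 1 t) (fun t => (opowCoeff β (g t) : ℝ≥0∞)) (Ioi 0) := by
    intro t ht
    by_cases htε : t ∈ Ioc 0 ε
    · by_cases htD : t ∈ D
      · simp [_root_.subInd, htε, htD, sub_omega0_opow_eq_self htD.2]
      · have hle : ω ^ β ≤ g t := hβ.trans (hg t ε htε.1 htε.2)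
        have hlt : g t < ω ^ (β + 1) := lt_of_not_ge fun h => htD ⟨ht, h⟩
        simp [_root_.subInd, htε, htD, ← opowCoeff_sub_add_one hle hlt]
    · simp [_root_.subInd, htε]
  have hind : ∫⁻ t in Ioi 0, (Ioc 0 ε \ D).indicator 1 t = volume (Ioc 0 ε \ D) := by
    rw [lintegral_indicator_one hmeas, Measure.restrict_apply hmeas,
      inter_eq_left.2 fun t ht => ht.1.1]
  rw [coeffMass, coeffMass, ← hind, ← lintegral_add_right _ (measurable_one.indicator hmeas),
    setLIntegral_congr_fun measurableSet_Ioi hpt]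

/-- The step function taking the values `a₁, a₂, …` on consecutive intervals
`(0, m₁], (m₁, m₁ + m₂], …` for `l = [(a₁, m₁), (a₂, m₂), …]`, and `0` afterwards. -/
noncomputable def stepFun : List (Ordinal × ℝ) → ℝ → Ordinal
  | [], _ => 0
  | (a, m) :: l, t => if t ≤ m then a else stepFun l (t - m)

def IsStepData (l : List (Ordinal × ℝ)) : Prop :=
  (∀ p ∈ l, p.1 ≠ 0 ∧ 0 ≤ p.2) ∧ (l.map Prod.fst).Pairwise (· > ·)

namespace IsStepData

variable {a : Ordinal} {m : ℝ} {l : List (Ordinal × ℝ)}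

theorem tail (h : IsStepData ((a, m) :: l)) : IsStepData l :=
  ⟨fun p hp => h.1 p (List.mem_cons_of_mem _ hp), (List.pairwise_cons.1 h.2).2⟩

theorem head_ne_zero (h : IsStepData ((a, m) :: l)) : a ≠ 0 := (h.1 _ List.mem_cons_self).1

theorem head_nonneg (h : IsStepData ((a, m) :: l)) : 0 ≤ m := (h.1 _ List.mem_cons_self).2

theorem lt_head (h : IsStepData ((a, m) :: l)) {b : Ordinal} (hb : b ∈ l.map Prod.fst) : b < a :=
  (List.pairwise_cons.1 h.2).1 b hb

end IsStepData

theorem stepFun_eq_zero_or_mem (l : List (Ordinal × ℝ)) (t : ℝ) :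
    stepFun l t = 0 ∨ stepFun l t ∈ l.map Prod.fst := by
  induction l generalizing t with
  | nil => exact Or.inl rfl
  | cons p l ih =>
    rw [stepFun]
    split_ifs
    · exact Or.inr List.mem_cons_self
    · exact (ih _).imp_right (List.mem_cons_of_mem _)

theorem stepFun_nonIncr {l : List (Ordinal × ℝ)} (h : IsStepData l) : NonIncr (stepFun l) := by
  induction l with
  | nil => exact fun _ _ _ _ => le_rfl
  | cons p l ih =>
    obtain ⟨a, m⟩ := p
    intro s t hs hst
    by_cases htm : t ≤ m
    · simp only [stepFun, if_pos htm, if_pos (hst.trans htm), le_rfl]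
    simp only [stepFun, if_neg htm]
    by_cases hsm : s ≤ m
    · rw [if_pos hsm]
      rcases stepFun_eq_zero_or_mem l (t - m) with h0 | hmem
      · exact h0 ▸ zero_le
      · exact (h.lt_head hmem).le
    · rw [if_neg hsm]
      exact ih h.tail _ _ (by linarith) (by linarith)

theorem stepFun_leftCont {l : List (Ordinal × ℝ)} (h : IsStepData l) : LeftCont (stepFun l) := by
  induction l with
  | nil => exact fun _ _ => ⟨1, one_pos, fun _ _ _ => rfl⟩
  | cons p l ih =>
    obtain ⟨a, m⟩ := p
    intro t ht
    by_cases htm : t ≤ m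
    · refine ⟨t, ht, fun s _ hst => ?_⟩
      simp only [stepFun, if_pos htm, if_pos (hst.trans htm)]
    · obtain ⟨δ, hδ, hconst⟩ := ih h.tail (t - m) (by linarith)
      refine ⟨min δ (t - m), lt_min hδ (by linarith), fun s hs hst => ?_⟩
      have hδ₁ := min_le_left δ (t - m)
      have hδ₂ := min_le_right δ (t - m)
      have hms : ¬s ≤ m := by linarith
      simp only [stepFun, if_neg htm, if_neg hms]
      exact hconst _ (by linarith) (by linarith)

theorem stepFun_vanishesBeyond {l : List (Ordinal × ℝ)} (h : IsStepData l) :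
    VanishesBeyond (stepFun l) (l.map Prod.snd).sum := by
  induction l with
  | nil => exact fun _ _ => rfl
  | cons p l ih =>
    obtain ⟨a, m⟩ := p
    intro t ht
    have hsum : 0 ≤ (l.map Prod.snd).sum := List.sum_nonneg fun x hx => by
      obtain ⟨q, hq, rfl⟩ := List.mem_map.1 hx
      exact (h.1 q (List.mem_cons_of_mem _ hq)).2
    simp only [List.map_cons, List.sum_cons] at ht
    rw [stepFun, if_neg (by linarith)]
    exact ih h.tail _ (by linarith)

theorem stepFun_finiteRange (l : List (Ordinal × ℝ)) : FiniteRange (stepFun l) := by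
  refine ((l.map Prod.fst).finite_toSet.insert 0).subset ?_
  rintro _ ⟨t, _, rfl⟩
  exact stepFun_eq_zero_or_mem l t

theorem lev_stepFun_cons_self {a : Ordinal} {m : ℝ} {l : List (Ordinal × ℝ)}
    (h : IsStepData ((a, m) :: l)) : lev (stepFun ((a, m) :: l)) a = Ioc 0 m := by
  ext t
  simp only [lev, mem_ofPred_eq, mem_Ioc, stepFun]
  refine and_congr_right fun _ => ⟨fun hv => ?_, fun htm => if_pos htm⟩
  by_contra htm
  rw [if_neg htm] at hv
  rcases stepFun_eq_zero_or_mem l (t - m) with h0 | hmem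
  · exact h.head_ne_zero (hv.symm.trans h0)
  · exact (h.lt_head hmem).ne hv

theorem lev_stepFun_cons_of_ne {a α : Ordinal} {m : ℝ} (l : List (Ordinal × ℝ)) (hm : 0 ≤ m)
    (hα : α ≠ a) : lev (stepFun ((a, m) :: l)) α = (fun t => t - m) ⁻¹' lev (stepFun l) α := by
  ext t
  simp only [lev, mem_ofPred_eq, mem_preimage, stepFun]
  by_cases htm : t ≤ m
  · simp only [if_pos htm]
    exact ⟨fun h => absurd h.2.symm hα, fun h => by linarith [h.1]⟩
  · simp only [if_neg htm]
    exact and_congr_left fun _ => ⟨fun _ => by linarith, fun _ => by linarith⟩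

theorem volume_lev_stepFun_of_mem {l : List (Ordinal × ℝ)} (h : IsStepData l) {a : Ordinal}
    {m : ℝ} (hmem : (a, m) ∈ l) : volume (lev (stepFun l) a) = ENNReal.ofReal m := by
  induction l with
  | nil => exact absurd hmem List.not_mem_nil
  | cons p l ih =>
    obtain ⟨b, k⟩ := p
    rcases List.mem_cons.1 hmem with heq | hmem'
    · obtain ⟨rfl, rfl⟩ := Prod.mk.inj heq
      rw [lev_stepFun_cons_self h, Real.volume_Ioc, _root_.sub_zero]
    · rw [lev_stepFun_cons_of_ne l h.head_nonneg
        (h.lt_head (List.mem_map.2 ⟨_, hmem', rfl⟩)).ne]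
      simpa only [sub_eq_add_neg, measure_preimage_add_right] using ih h.tail hmem'

theorem volume_lev_stepFun_of_not_mem {l : List (Ordinal × ℝ)} (h : IsStepData l)
    {α : Ordinal} (hα₀ : α ≠ 0) (hα : α ∉ l.map Prod.fst) : volume (lev (stepFun l) α) = 0 := by
  induction l with
  | nil => simp [lev, stepFun, hα₀.symm]
  | cons p l ih =>
    obtain ⟨b, k⟩ := p
    rw [List.map_cons, List.mem_cons, not_or] at hα
    rw [lev_stepFun_cons_of_ne l h.head_nonneg hα.1]
    simpa only [sub_eq_add_neg, measure_preimage_add_right] using ih h.tail hα.2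

structure IsAdmissible (g : ℝ → Ordinal) : Prop where
  nonIncr : NonIncr g
  leftCont : LeftCont g
  finiteRange : FiniteRange g
  vanishesBeyond : ∃ A, VanishesBeyond g A

theorem IsStepData.isAdmissible {l : List (Ordinal × ℝ)} (h : IsStepData l) :
    IsAdmissible (stepFun l) :=
  ⟨stepFun_nonIncr h, stepFun_leftCont h, stepFun_finiteRange l, _, stepFun_vanishesBeyond h⟩

theorem exists_isRearrangement {u : ℝ → Ordinal} {A : ℝ} (hu : FiniteRange u)
    (hvan : VanishesBeyond u A) : ∃ G, IsAdmissible G ∧ IsRearrangement G u := by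
  set V := hu.toFinset.erase 0
  set l := (V.sort (· ≥ ·)).map fun α => (α, (volume (lev u α)).toReal)
  have hfst : l.map Prod.fst = V.sort (· ≥ ·) := by simp [l, Function.comp_def]
  have hl : IsStepData l := by
    refine ⟨fun p hp => ?_, hfst ▸ (Finset.sortedGT_sort V).pairwise⟩
    obtain ⟨α, hα, rfl⟩ := List.mem_map.1 hp
    exact ⟨(Finset.mem_erase.1 ((Finset.mem_sort _).1 hα)).1, ENNReal.toReal_nonneg⟩
  refine ⟨stepFun l, hl.isAdmissible, stepFun_nonIncr hl, stepFun_leftCont hl, fun α hα => ?_⟩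
  by_cases hV : α ∈ V
  · rw [volume_lev_stepFun_of_mem hl (List.mem_map.2 ⟨α, (Finset.mem_sort _).2 hV, rfl⟩),
      ENNReal.ofReal_toReal (hvan.volume_lev_lt_top hα.ne').ne]
  · have hempty : lev u α = ∅ := eq_empty_of_forall_notMem fun t ht =>
      hV (Finset.mem_erase.2 ⟨hα.ne', hu.mem_toFinset.2 ⟨t, ht.1, ht.2⟩⟩)
    rw [volume_lev_stepFun_of_not_mem hl hα.ne' (by rwa [hfst, Finset.mem_sort]), hempty,
      measure_empty]

theorem exists_reduction_step {g : ℝ → Ordinal} (hg : IsAdmissible g) {ε : ℝ} (hε : 0 < ε)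
    {β : Ordinal} (h₁ : ω ^ β ≤ g ε) (h₂ : g ε < ω ^ (β + 1)) :
    ∃ G, IsAdmissible G ∧ IsRearrangement G (subInd g (ω ^ β) (Ioc 0 ε)) ∧ G ε < ω ^ (β + 1) ∧
      volume (upperLev G (ω ^ (β + 1))) = volume (upperLev g (ω ^ (β + 1))) ∧
      coeffMass β G + (ENNReal.ofReal ε - volume (upperLev g (ω ^ (β + 1)))) =
        coeffMass β g := by
  obtain ⟨hni, hlc, hfr, A, hvan⟩ := hg
  set u := subInd g (ω ^ β) (Ioc 0 ε)
  have hu : FiniteRange u := hfr.subInd _ _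
  have hmu : ∀ α, MeasurableSet (lev u α) := hni.measurableSet_lev_subInd _ measurableSet_Ioc
  have hD : MeasurableSet (upperLev g (ω ^ (β + 1))) := hni.measurableSet_upperLev _
  have hDlt := volume_upperLev_lt hni hlc hε h₂
  obtain ⟨G, hG, hGu⟩ := exists_isRearrangement hu (hvan.subInd _ _)
  have hvol : volume (upperLev G (ω ^ (β + 1))) = volume (upperLev g (ω ^ (β + 1))) := by
    rw [hGu.volume_upperLev_eq hG.finiteRange hu hmu (opow_ne_zero _ omega0_ne_zero)
      (by rwa [upperLev_subInd_omega0_opow]), upperLev_subInd_omega0_opow]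
  refine ⟨G, hG, hGu, hG.nonIncr.lt_of_volume_upperLev_lt (hvol ▸ hDlt), hvol, ?_⟩
  rw [← coeffMass_subInd_add hni h₁ hD, coeffMass, coeffMass,
    setLIntegral_comp_eq_of_volume_lev_eq hG.finiteRange hu hG.nonIncr.measurableSet_lev hmu
      hGu.2.2 (φ := fun α => (opowCoeff β α : ℝ≥0∞)) (by simp [opowCoeff_zero]),
    measure_sdiff (hni.upperLev_subset_Ioc hε h₂) hD.nullMeasurableSet
      (hDlt.trans ENNReal.ofReal_lt_top).ne, Real.volume_Ioc, _root_.sub_zero]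

/-- The conclusion of the theorem for `g₀`, plus the bound `γ i ≤ ω ^ β` that allows prepending
a step `ω ^ β` (see `HasReductionSeq.cons`). -/
def HasReductionSeq (ε : ℝ) (β : Ordinal) (g₀ : ℝ → Ordinal) : Prop :=
  ∃ (n : ℕ) (g : ℕ → ℝ → Ordinal) (γ : ℕ → Ordinal),
    g 0 = g₀ ∧
    (∀ i ≤ n, NonIncr (g i) ∧ LeftCont (g i)) ∧
    (∀ i j : ℕ, i ≤ j → j < n → γ j ≤ γ i) ∧
    (∀ i < n, ∃ β' : Ordinal, γ i = ω ^ β') ∧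
    (∀ i < n, γ i ≤ g i ε) ∧
    (∀ i < n, IsRearrangement (g (i + 1)) (subInd (g i) (γ i) (Ioc 0 ε))) ∧
    (∀ t : ℝ, ε ≤ t → g n t = 0) ∧
    ∀ i < n, γ i ≤ ω ^ β

namespace HasReductionSeq

variable {ε : ℝ} {β : Ordinal} {g : ℝ → Ordinal}

theorem of_eq_zero (hni : NonIncr g) (hlc : LeftCont g) (hε : 0 < ε) (h : g ε = 0) :
    HasReductionSeq ε β g :=
  ⟨0, fun _ => g, fun _ => 0, rfl, fun _ _ => ⟨hni, hlc⟩, by simp, by simp, by simp, by simp,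
    fun t ht => nonpos_iff_eq_zero.1 (h ▸ hni ε t hε ht), by simp⟩

theorem mono {β' : Ordinal} (h : HasReductionSeq ε β g) (hββ' : β ≤ β') :
    HasReductionSeq ε β' g := by
  obtain ⟨n, gs, γ, h₀, hreg, hanti, hpow, hle, hre, hend, hbound⟩ := h
  exact ⟨n, gs, γ, h₀, hreg, hanti, hpow, hle, hre, hend,
    fun i hi => (hbound i hi).trans (opow_le_opow_right omega0_pos hββ')⟩

theorem cons {G : ℝ → Ordinal} (hni : NonIncr g) (hlc : LeftCont g) (hβ : ω ^ β ≤ g ε)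
    (hG : IsRearrangement G (subInd g (ω ^ β) (Ioc 0 ε))) (h : HasReductionSeq ε β G) :
    HasReductionSeq ε β g := by
  obtain ⟨n, gs, γ, h₀, hreg, hanti, hpow, hle, hre, hend, hbound⟩ := h
  refine ⟨n + 1, fun | 0 => g | i + 1 => gs i, fun | 0 => ω ^ β | i + 1 => γ i, rfl,
    ?_, ?_, ?_, ?_, ?_, hend, ?_⟩
  · rintro (_ | i) hi
    exacts [⟨hni, hlc⟩, hreg i (by omega)]
  · rintro (_ | i) (_ | j) hij hj
    exacts [le_rfl, hbound j (by omega), absurd hij (by omega), hanti i j (by omega) (by omega)]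
  · rintro (_ | i) hi
    exacts [⟨β, rfl⟩, hpow i (by omega)]
  · rintro (_ | i) hi
    exacts [hβ, hle i (by omega)]
  · rintro (_ | i) hi
    · show IsRearrangement (gs 0) (subInd g (ω ^ β) (Ioc 0 ε))
      rwa [h₀]
    · exact hre i (by omega)
  · rintro (_ | i) hi
    exacts [le_rfl, hbound i (by omega)]

end HasReductionSeq

theorem hasReductionSeq_of_lt_omega0_opow {ε : ℝ} (hε : 0 < ε) {β : Ordinal}
    (ih : ∀ β' < β, ∀ g, IsAdmissible g → g ε < ω ^ (β' + 1) → HasReductionSeq ε β' g)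
    {g : ℝ → Ordinal} (hg : IsAdmissible g) (h : g ε < ω ^ β) : HasReductionSeq ε β g := by
  rcases eq_or_ne (g ε) 0 with h₀ | h₀
  · exact .of_eq_zero hg.nonIncr hg.leftCont hε h₀
  · have hlog := (lt_opow_iff_log_lt one_lt_omega0 h₀).1 h
    exact (ih _ hlog g hg (lt_omega0_opow_log_add_one _)).mono hlog.le

/-- Induction on the number of steps left in the phase `ω ^ β ≤ g ε < ω ^ (β + 1)`, during which
the measure `H` of `{g ≥ ω ^ (β + 1)}` stays fixed and each step lowers `coeffMass β g` by
`ε - H`. -/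
theorem hasReductionSeq_of_coeffMass_lt {ε : ℝ} (hε : 0 < ε) {β : Ordinal}
    (ih : ∀ β' < β, ∀ g, IsAdmissible g → g ε < ω ^ (β' + 1) → HasReductionSeq ε β' g)
    {H : ℝ≥0∞} (n : ℕ) :
    ∀ g, IsAdmissible g → g ε < ω ^ (β + 1) → volume (upperLev g (ω ^ (β + 1))) = H →
      coeffMass β g < n * (ENNReal.ofReal ε - H) → HasReductionSeq ε β g := by
  induction n with
  | zero => simp
  | succ n ihn =>
    intro g hg h₂ hvol hmass
    by_cases h₁ : g ε < ω ^ β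
    · exact hasReductionSeq_of_lt_omega0_opow hε ih hg h₁
    obtain ⟨G, hG, hGu, hG₂, hGvol, hGmass⟩ := exists_reduction_step hg hε (not_lt.1 h₁) h₂
    refine .cons hg.nonIncr hg.leftCont (not_lt.1 h₁) hGu (ihn G hG hG₂ (hGvol.trans hvol) ?_)
    rw [← hGmass, hvol, Nat.cast_succ, add_one_mul] at hmass
    exact (ENNReal.add_lt_add_iff_right (tsub_le_self.trans_lt ENNReal.ofReal_lt_top).ne).1 hmass

theorem hasReductionSeq {ε : ℝ} (hε : 0 < ε) (β : Ordinal) :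
    ∀ g, IsAdmissible g → g ε < ω ^ (β + 1) → HasReductionSeq ε β g := by
  induction β using WellFoundedLT.induction with
  | _ β ih =>
    intro g hg h₂
    obtain ⟨A, hvan⟩ := hg.vanishesBeyond
    have hH := volume_upperLev_lt hg.nonIncr hg.leftCont hε h₂
    obtain ⟨n, hn⟩ := ENNReal.exists_nat_mul_gt (tsub_pos_of_lt hH).ne'
      (coeffMass_ne_top hg.finiteRange hvan hg.nonIncr.measurableSet_lev β)
    exact hasReductionSeq_of_coeffMass_lt hε ih n g hg h₂ rfl hn

theorem stmt_2_general (ε t₀ : ℝ) (hε : 0 < ε) (g₀ : ℝ → Ordinal)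
    (hNI : NonIncr g₀) (hLC : LeftCont g₀) (hFR : FiniteRange g₀)
    (hvan : ∀ t : ℝ, t₀ < t → g₀ t = 0) :
    ∃ (n : ℕ) (g : ℕ → ℝ → Ordinal) (γ : ℕ → Ordinal),
      g 0 = g₀ ∧
      (∀ i ≤ n, NonIncr (g i) ∧ LeftCont (g i)) ∧
      (∀ i j : ℕ, i ≤ j → j < n → γ j ≤ γ i) ∧
      (∀ i < n, ∃ β : Ordinal, γ i = (ω : Ordinal) ^ β) ∧
      (∀ i < n, γ i ≤ g i ε) ∧
      (∀ i < n, IsRearrangement (g (i + 1)) (subInd (g i) (γ i) (Set.Ioc 0 ε))) ∧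
      (∀ t : ℝ, ε ≤ t → g n t = 0) := by
  obtain ⟨n, g, γ, h₀, hreg, hanti, hpow, hle, hre, hend, -⟩ :=
    hasReductionSeq hε _ g₀ ⟨hNI, hLC, hFR, t₀, hvan⟩ (lt_omega0_opow_log_add_one _)
  exact ⟨n, g, γ, h₀, hreg, hanti, hpow, hle, hre, hend⟩

/-- Proposition 3.5, existence part. -/
theorem stmt_2 (ε t₀ : ℝ) (hε : 0 < ε) (g₀ : ℝ → Ordinal)
    (hNI : NonIncr g₀) (hLC : LeftCont g₀) (hFR : FiniteRange g₀) (hCV : CountableValued g₀)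
    (hvan : ∀ t : ℝ, t₀ < t → g₀ t = 0) :
    ∃ (n : ℕ) (g : ℕ → ℝ → Ordinal) (γ : ℕ → Ordinal),
      g 0 = g₀ ∧
      (∀ i ≤ n, NonIncr (g i) ∧ LeftCont (g i)) ∧
      (∀ i j : ℕ, i ≤ j → j < n → γ j ≤ γ i) ∧
      (∀ i < n, ∃ β : Ordinal, γ i = (ω : Ordinal) ^ β) ∧
      (∀ i < n, γ i ≤ g i ε) ∧
      (∀ i < n, IsRearrangement (g (i + 1)) (subInd (g i) (γ i) (Set.Ioc 0 ε))) ∧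
      (∀ t : ℝ, ε ≤ t → g n t = 0) :=
  stmt_2_general ε t₀ hε g₀ hNI hLC hFR hvan
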